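/- arXiv:2603.14179 — 2 statements merged into one kernel-verified Lean document; each statement's English description precedes it below -/
import Mathlib

section
/- Slater's identity (8), equivalent form: ∑_{n=0}^∞ (-q;q)_n q^(n(n+1)/2) / (q;q)_n = (-q;q)_∞ (-q²;q²)_∞. -/
/-!
By the finite q-binomial theorem `(-x;Q)_n = ∑_k Q^(k(k-1)/2) x^k [n,k]_Q`, the `n`-th term of the
series is `∑_{k+m=n} q^(k(k+1))/(q;q)_k · q^(m(m-1)/2) (q^(k+1))^m/(q;q)_m`, and this double series
converges absolutely. Letting `n → ∞` in the q-binomial theorem (dominated convergence) gives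
Euler's identity `∑_m Q^(m(m-1)/2) x^m/(Q;Q)_m = (-x;Q)_∞`. Summing over `m` first, it turns the
inner sum into `(-q^(k+1);q)_∞ = (-q;q)_∞/(-q;q)_k`; since `(q;q)_k (-q;q)_k = (q²;q²)_k`, the
remaining sum over `k` is Euler's identity again, with base `q²` and `x = q²`.
-/

noncomputable def qPoch (a q : ℂ) (n : ℕ) : ℂ := ∏ i ∈ Finset.range n, (1 - a * q ^ i)

noncomputable def qPochInf (a q : ℂ) : ℂ := ∏' i : ℕ, (1 - a * q ^ i)

open Finset Filter Topology

theorem Nat.choose_two_succ (n : ℕ) : (n + 1).choose 2 = n.choose 2 + n := by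
  simp [Nat.choose_succ_succ', add_comm]

theorem Nat.choose_two_add (k m : ℕ) : (k + m).choose 2 = k.choose 2 + m.choose 2 + k * m := by
  induction m with
  | zero => simp
  | succ m ih => rw [← add_assoc, Nat.choose_two_succ, Nat.choose_two_succ, ih]; ring

theorem Nat.two_mul_choose_two_succ (n : ℕ) : 2 * (n + 1).choose 2 = n * (n + 1) := by
  induction n with
  | zero => simp
  | succ n ih => rw [Nat.choose_two_succ, mul_add, ih]; ring

theorem Nat.mul_succ_div_two (n : ℕ) : n * (n + 1) / 2 = (n + 1).choose 2 := by
  rw [← Nat.two_mul_choose_two_succ, Nat.mul_div_cancel_left _ two_pos]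

section Finite

variable (a Q : ℂ)

theorem qPoch_zero : qPoch a Q 0 = 1 := prod_range_zero _

theorem qPoch_succ (n : ℕ) : qPoch a Q (n + 1) = qPoch a Q n * (1 - a * Q ^ n) :=
  prod_range_succ _ n

theorem qPoch_succ' (n : ℕ) : qPoch a Q (n + 1) = (1 - a) * qPoch (a * Q) Q n := by
  simp only [qPoch, prod_range_succ', pow_zero, mul_one, pow_succ', mul_assoc]
  rw [mul_comm]

theorem qPoch_self_succ (n : ℕ) : qPoch Q Q (n + 1) = qPoch Q Q n * (1 - Q ^ (n + 1)) := by
  rw [qPoch_succ, pow_succ']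

theorem qPoch_mul_qPoch_neg (n : ℕ) : qPoch a Q n * qPoch (-a) Q n = qPoch (a ^ 2) (Q ^ 2) n := by
  simp only [qPoch, ← prod_mul_distrib]
  refine prod_congr rfl fun i _ => ?_
  ring

end Finite

noncomputable def qBinomial (Q : ℂ) : ℕ → ℕ → ℂ
  | _, 0 => 1
  | 0, _ + 1 => 0
  | n + 1, k + 1 => qBinomial Q n k + Q ^ (k + 1) * qBinomial Q n (k + 1)

section QBinomial

variable (Q : ℂ)

@[simp]
theorem qBinomial_zero_right (n : ℕ) : qBinomial Q n 0 = 1 := by cases n <;> rfl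

theorem qBinomial_succ_succ (n k : ℕ) :
    qBinomial Q (n + 1) (k + 1) = qBinomial Q n k + Q ^ (k + 1) * qBinomial Q n (k + 1) := rfl

theorem qBinomial_eq_zero_of_lt {n k : ℕ} (h : n < k) : qBinomial Q n k = 0 := by
  induction n generalizing k with
  | zero => obtain ⟨k, rfl⟩ := Nat.exists_eq_succ_of_ne_zero h.ne'; rfl
  | succ n ih =>
    obtain ⟨k, rfl⟩ := Nat.exists_eq_succ_of_ne_zero (Nat.ne_zero_of_lt h)
    rw [qBinomial_succ_succ, ih (by omega), ih (by omega), mul_zero, add_zero]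

theorem qBinomial_mul_qPoch_mul_qPoch {n k : ℕ} (h : k ≤ n) :
    qBinomial Q n k * (qPoch Q Q k * qPoch Q Q (n - k)) = qPoch Q Q n := by
  induction n generalizing k with
  | zero => obtain rfl := Nat.le_zero.1 h; simp [qPoch_zero]
  | succ n ih =>
    cases k with
    | zero => simp [qPoch_zero]
    | succ k =>
      have hk : k ≤ n := by omega
      have hsecond : qBinomial Q n (k + 1) * (qPoch Q Q (k + 1) * qPoch Q Q (n - k))
          = qPoch Q Q n * (1 - Q ^ (n - k)) := by
        rcases hk.lt_or_eq with hlt | rfl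
        · have e : n - k = n - (k + 1) + 1 := by omega
          rw [e, qPoch_self_succ Q (n - (k + 1)), ← ih hlt]
          ring
        · simp [qBinomial_eq_zero_of_lt Q (Nat.lt_succ_self k)]
      have hpow : Q ^ (k + 1) * Q ^ (n - k) = Q ^ (n + 1) := by
        rw [← pow_add]; congr 1; omega
      rw [qPoch_self_succ Q k] at hsecond ⊢
      rw [qBinomial_succ_succ, Nat.succ_sub_succ, qPoch_self_succ Q n]
      linear_combination (1 - Q ^ (k + 1)) * ih hk + Q ^ (k + 1) * hsecond - qPoch Q Q n * hpow

theorem qPoch_neg_eq_sum_qBinomial (x : ℂ) (n : ℕ) :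
    qPoch (-x) Q n = ∑ k ∈ range (n + 1), Q ^ k.choose 2 * x ^ k * qBinomial Q n k := by
  induction n generalizing x with
  | zero => simp [qPoch_zero]
  | succ n ih =>
    set S := ∑ k ∈ range (n + 1), Q ^ k.choose 2 * (x * Q) ^ k * qBinomial Q n k
      with hS
    have hfirst : ∑ k ∈ range (n + 1), Q ^ (k + 1).choose 2 * x ^ (k + 1) * qBinomial Q n k
        = x * S := by
      rw [mul_sum]
      refine sum_congr rfl fun k _ => ?_
      rw [Nat.choose_two_succ]
      ring
    have hsecond : ∑ k ∈ range (n + 1),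
        Q ^ (k + 1).choose 2 * x ^ (k + 1) * (Q ^ (k + 1) * qBinomial Q n (k + 1)) + 1 = S := by
      rw [sum_range_succ, qBinomial_eq_zero_of_lt Q (Nat.lt_succ_self n), hS, sum_range_succ' _ n]
      simp only [mul_zero, add_zero, Nat.choose_zero_succ, pow_zero, qBinomial_zero_right, mul_one]
      congr 1
      refine sum_congr rfl fun k _ => ?_
      ring
    rw [qPoch_succ', neg_mul, sub_neg_eq_add, ih, sum_range_succ' _ (n + 1)]
    simp only [qBinomial_succ_succ, mul_add, sum_add_distrib, hfirst]
    simp only [Nat.choose_zero_succ, pow_zero, qBinomial_zero_right, mul_one]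
    linear_combination -hsecond

end QBinomial

theorem exists_pos_le_norm_of_tendsto {𝕜 : Type*} [NormedDivisionRing 𝕜] {u : ℕ → 𝕜} {L : 𝕜}
    (h : Tendsto u atTop (𝓝 L)) (hL : L ≠ 0) (hu : ∀ n, u n ≠ 0) :
    ∃ C > 0, ∀ n, C ≤ ‖u n‖ := by
  obtain ⟨B, hB⟩ := (h.inv₀ hL).norm.bddAbove_range
  have hB' : ∀ n, ‖u n‖⁻¹ ≤ B := fun n => by simpa using hB ⟨n, rfl⟩
  have hBpos : 0 < B := (inv_pos.2 (norm_pos_iff.2 (hu 0))).trans_le (hB' 0)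
  exact ⟨B⁻¹, inv_pos.2 hBpos, fun n => (inv_le_comm₀ (norm_pos_iff.2 (hu n)) hBpos).1 (hB' n)⟩

section Analytic

variable {a Q : ℂ}

theorem mul_pow_ne_one (ha : ‖a‖ < 1) (hQ : ‖Q‖ ≤ 1) (i : ℕ) : a * Q ^ i ≠ 1 := by
  intro h
  have : ‖a‖ * ‖Q‖ ^ i = 1 := by simpa using congrArg norm h
  nlinarith [pow_le_one₀ (norm_nonneg Q) hQ (n := i), norm_nonneg a, pow_nonneg (norm_nonneg Q) i]

theorem summable_norm_neg_mul_pow (hQ : ‖Q‖ < 1) : Summable fun i : ℕ => ‖-(a * Q ^ i)‖ := by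
  simpa using (summable_geometric_of_lt_one (norm_nonneg Q) hQ).mul_left ‖a‖

theorem multipliable_one_sub_mul_pow (hQ : ‖Q‖ < 1) :
    Multipliable fun i : ℕ => 1 - a * Q ^ i := by
  simpa [sub_eq_add_neg] using multipliable_one_add_of_summable (summable_norm_neg_mul_pow hQ)

theorem tendsto_qPoch (hQ : ‖Q‖ < 1) : Tendsto (qPoch a Q) atTop (𝓝 (qPochInf a Q)) :=
  (multipliable_one_sub_mul_pow hQ).hasProd.tendsto_prod_nat

theorem qPoch_ne_zero (ha : ∀ i, a * Q ^ i ≠ 1) (n : ℕ) : qPoch a Q n ≠ 0 :=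
  prod_ne_zero_iff.2 fun i _ => sub_ne_zero.2 (ha i).symm

theorem qPochInf_ne_zero (hQ : ‖Q‖ < 1) (ha : ∀ i, a * Q ^ i ≠ 1) : qPochInf a Q ≠ 0 := by
  simpa [qPochInf, sub_eq_add_neg] using tprod_one_add_ne_zero_of_summable
    (fun i => by simpa [← sub_eq_add_neg] using sub_ne_zero.2 (ha i).symm)
    (summable_norm_neg_mul_pow hQ)

theorem qPochInf_eq_qPoch_mul (hQ : ‖Q‖ < 1) (k : ℕ) :
    qPochInf a Q = qPoch a Q k * qPochInf (a * Q ^ k) Q := by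
  have hshift : (fun i => 1 - a * Q ^ k * Q ^ i) = fun i => 1 - a * Q ^ (i + k) := by
    ext i; ring
  have hmult : Multipliable fun i => 1 - a * Q ^ (i + k) := by
    rw [← hshift]; exact multipliable_one_sub_mul_pow hQ
  rw [qPochInf, qPoch, qPochInf, hshift]
  exact (Multipliable.prod_mul_tprod_nat_mul' (f := fun i => 1 - a * Q ^ i) hmult).symm

theorem exists_norm_qPoch_le (hQ : ‖Q‖ < 1) : ∃ M, ∀ n, ‖qPoch a Q n‖ ≤ M := by
  obtain ⟨M, hM⟩ := (tendsto_qPoch (a := a) hQ).norm.bddAbove_range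
  exact ⟨M, fun n => hM ⟨n, rfl⟩⟩

theorem exists_pos_le_norm_qPoch (hQ : ‖Q‖ < 1) : ∃ C > 0, ∀ n, C ≤ ‖qPoch Q Q n‖ :=
  exists_pos_le_norm_of_tendsto (tendsto_qPoch hQ) (qPochInf_ne_zero hQ (mul_pow_ne_one hQ hQ.le))
    (qPoch_ne_zero (mul_pow_ne_one hQ hQ.le))

theorem qBinomial_eq_div (hQ : ‖Q‖ < 1) {n k : ℕ} (h : k ≤ n) :
    qBinomial Q n k = qPoch Q Q n / (qPoch Q Q k * qPoch Q Q (n - k)) := by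
  have hne := qPoch_ne_zero (mul_pow_ne_one hQ hQ.le)
  rw [eq_div_iff (mul_ne_zero (hne k) (hne (n - k)))]
  exact qBinomial_mul_qPoch_mul_qPoch Q h

theorem exists_norm_qBinomial_le (hQ : ‖Q‖ < 1) : ∃ B, ∀ n k, ‖qBinomial Q n k‖ ≤ B := by
  obtain ⟨C, hC, hCle⟩ := exists_pos_le_norm_qPoch hQ
  obtain ⟨M, hM⟩ := exists_norm_qPoch_le (a := Q) hQ
  have hM0 : 0 ≤ M := (norm_nonneg _).trans (hM 0)
  refine ⟨M / (C * C), fun n k => ?_⟩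
  rcases le_or_gt k n with h | h
  · rw [qBinomial_eq_div hQ h, norm_div, norm_mul]
    exact div_le_div₀ hM0 (hM n) (by positivity)
      (mul_le_mul (hCle k) (hCle _) hC.le (norm_nonneg _))
  · rw [qBinomial_eq_zero_of_lt Q h, norm_zero]
    positivity

theorem tendsto_qBinomial (hQ : ‖Q‖ < 1) (k : ℕ) :
    Tendsto (fun n => qBinomial Q n k) atTop (𝓝 (qPoch Q Q k)⁻¹) := by
  have hlim := tendsto_qPoch (a := Q) hQ
  have hinf := qPochInf_ne_zero hQ (mul_pow_ne_one hQ hQ.le)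
  have h := hlim.div ((hlim.comp (tendsto_sub_atTop_nat k)).const_mul (qPoch Q Q k))
    (mul_ne_zero (qPoch_ne_zero (mul_pow_ne_one hQ hQ.le) k) hinf)
  rw [mul_comm, ← div_div, div_self hinf, one_div] at h
  refine h.congr' ?_
  filter_upwards [eventually_ge_atTop k] with n hn
  exact (qBinomial_eq_div hQ hn).symm

end Analytic

noncomputable def eulerTerm (Q x : ℂ) (k : ℕ) : ℂ := Q ^ k.choose 2 * x ^ k / qPoch Q Q k

section Euler

variable {Q : ℂ}

theorem norm_eulerTerm_le (hQ : ‖Q‖ ≤ 1) {C : ℝ} (hC : 0 < C) (hCle : ∀ k, C ≤ ‖qPoch Q Q k‖)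
    (x : ℂ) (k : ℕ) : ‖eulerTerm Q x k‖ ≤ C⁻¹ * ‖x‖ ^ k := by
  rw [eulerTerm, norm_div, norm_mul, norm_pow, norm_pow, div_le_iff₀ (hC.trans_le (hCle k))]
  calc ‖Q‖ ^ k.choose 2 * ‖x‖ ^ k ≤ ‖x‖ ^ k :=
        mul_le_of_le_one_left (by positivity) (pow_le_one₀ (norm_nonneg Q) hQ)
    _ ≤ C⁻¹ * ‖x‖ ^ k * ‖qPoch Q Q k‖ := by
        rw [mul_right_comm, ← div_eq_inv_mul]
        exact le_mul_of_one_le_left (by positivity) ((one_le_div hC).2 (hCle k))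

theorem summable_eulerTerm (hQ : ‖Q‖ < 1) {x : ℂ} (hx : ‖x‖ < 1) : Summable (eulerTerm Q x) := by
  obtain ⟨C, hC, hCle⟩ := exists_pos_le_norm_qPoch hQ
  exact .of_norm_bounded ((summable_geometric_of_lt_one (norm_nonneg x) hx).mul_left C⁻¹)
    (norm_eulerTerm_le hQ.le hC hCle x)

theorem hasSum_eulerTerm (hQ : ‖Q‖ < 1) {x : ℂ} (hx : ‖x‖ < 1) :
    HasSum (eulerTerm Q x) (qPochInf (-x) Q) := by
  obtain ⟨B, hB⟩ := exists_norm_qBinomial_le hQ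
  have hfinite : ∀ n, ∑' k, Q ^ k.choose 2 * x ^ k * qBinomial Q n k = qPoch (-x) Q n := by
    intro n
    rw [qPoch_neg_eq_sum_qBinomial, tsum_eq_sum fun k hk => ?_]
    rw [qBinomial_eq_zero_of_lt Q (by simpa using hk), mul_zero]
  have hbound : ∀ n k, ‖Q ^ k.choose 2 * x ^ k * qBinomial Q n k‖ ≤ B * ‖x‖ ^ k := by
    intro n k
    rw [norm_mul, norm_mul, norm_pow, norm_pow, mul_comm B]
    exact mul_le_mul (mul_le_of_le_one_left (by positivity) (pow_le_one₀ (norm_nonneg Q) hQ.le))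
      (hB n k) (norm_nonneg _) (by positivity)
  have hlim := tendsto_tsum_of_dominated_convergence
    ((summable_geometric_of_lt_one (norm_nonneg x) hx).mul_left B)
    (fun k => (tendsto_qBinomial hQ k).const_mul (Q ^ k.choose 2 * x ^ k))
    (Eventually.of_forall hbound)
  simp only [hfinite, ← div_eq_mul_inv] at hlim
  have hval : ∑' k, eulerTerm Q x k = qPochInf (-x) Q :=
    tendsto_nhds_unique hlim (tendsto_qPoch hQ)
  exact hval ▸ (summable_eulerTerm hQ hx).hasSum

end Euler

theorem HasSum.sum_antidiagonal {α A : Type*} [AddCommMonoid α] [TopologicalSpace α]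
    [ContinuousAdd α] [RegularSpace α] [AddMonoid A] [HasAntidiagonal A]
    {f : A × A → α} {s : α} (hf : HasSum f s) :
    HasSum (fun n => ∑ p ∈ antidiagonal n, f p) s :=
  ((HasAntidiagonal.sigmaAntidiagonalEquivProd (A := A)).hasSum_iff.2 hf).sigma
    fun n => (antidiagonal n).hasSum f

noncomputable def slaterSummand (q : ℂ) (p : ℕ × ℕ) : ℂ :=
  q ^ (p.1 * (p.1 + 1)) / qPoch q q p.1 * eulerTerm q (q ^ (p.1 + 1)) p.2

section Slater

variable {q : ℂ}

theorem summable_slaterSummand (hq : ‖q‖ < 1) : Summable (slaterSummand q) := by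
  obtain ⟨C, hC, hCle⟩ := exists_pos_le_norm_qPoch hq
  have hgeom : Summable fun k : ℕ => C⁻¹ * ‖q‖ ^ k :=
    (summable_geometric_of_lt_one (norm_nonneg q) hq).mul_left C⁻¹
  refine .of_norm_bounded
    (hgeom.mul_of_nonneg hgeom (fun _ => by positivity) fun _ => by positivity)
    fun ⟨k, m⟩ => norm_mul_le_of_le ?_ ?_
  · rw [norm_div, norm_pow, ← div_eq_inv_mul]
    gcongr ?_ / ?_
    · exact pow_le_pow_of_le_one (norm_nonneg q) hq.le (Nat.le_mul_of_pos_right k k.succ_pos)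
    · exact hCle k
  · refine (norm_eulerTerm_le hq.le hC hCle _ m).trans ?_
    gcongr
    rw [norm_pow]
    exact pow_le_of_le_one (norm_nonneg q) hq.le k.succ_ne_zero

theorem hasSum_slaterSummand_row (hq : ‖q‖ < 1) (k : ℕ) :
    HasSum (fun m => slaterSummand q (k, m)) (qPochInf (-q) q * eulerTerm (q ^ 2) (q ^ 2) k) := by
  have hx : ‖q ^ (k + 1)‖ < 1 := by
    rw [norm_pow]; exact pow_lt_one₀ (norm_nonneg q) hq k.succ_ne_zero
  have hexp : (q ^ 2) ^ k.choose 2 * (q ^ 2) ^ k = q ^ (k * (k + 1)) := by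
    rw [← pow_mul, ← pow_mul, ← pow_add, ← Nat.two_mul_choose_two_succ, Nat.choose_two_succ]
    ring
  have htail : qPochInf (-q) q = qPoch (-q) q k * qPochInf (-q ^ (k + 1)) q := by
    rw [qPochInf_eq_qPoch_mul hq k, neg_mul, ← pow_succ']
  have hne : qPoch q q k ≠ 0 := qPoch_ne_zero (mul_pow_ne_one hq hq.le) k
  have hne' : qPoch (-q) q k ≠ 0 := qPoch_ne_zero (mul_pow_ne_one (by rwa [norm_neg]) hq.le) k
  have hval : qPochInf (-q) q * eulerTerm (q ^ 2) (q ^ 2) k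
      = q ^ (k * (k + 1)) / qPoch q q k * qPochInf (-q ^ (k + 1)) q := by
    rw [eulerTerm, hexp, ← qPoch_mul_qPoch_neg, htail]
    field_simp
  rw [hval]
  show HasSum (fun m => q ^ (k * (k + 1)) / qPoch q q k * eulerTerm q (q ^ (k + 1)) m) _
  exact (hasSum_eulerTerm hq hx).mul_left _

theorem hasSum_slaterSummand (hq : ‖q‖ < 1) :
    HasSum (slaterSummand q) (qPochInf (-q) q * qPochInf (-q ^ 2) (q ^ 2)) := by
  have hq2 : ‖q ^ 2‖ < 1 := by rw [norm_pow]; exact pow_lt_one₀ (norm_nonneg q) hq two_ne_zero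
  have hrows := (hasSum_eulerTerm hq2 hq2).mul_left (qPochInf (-q) q)
  have hF := (summable_slaterSummand hq).hasSum
  rwa [← (hF.prod_fiberwise (hasSum_slaterSummand_row hq)).unique hrows]

theorem sum_antidiagonal_slaterSummand (hq : ‖q‖ < 1) (n : ℕ) :
    qPoch (-q) q n * q ^ (n * (n + 1) / 2) / qPoch q q n
      = ∑ p ∈ antidiagonal n, slaterSummand q p := by
  rw [qPoch_neg_eq_sum_qBinomial, Nat.sum_antidiagonal_eq_sum_range_succ_mk, sum_mul, sum_div]
  refine sum_congr rfl fun k hk => ?_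
  obtain ⟨m, rfl⟩ := Nat.exists_eq_add_of_le (Nat.lt_succ_iff.1 (mem_range.1 hk))
  have hexp : k.choose 2 + k + (k + m + 1).choose 2
      = k * (k + 1) + (m.choose 2 + (k + 1) * m) := by
    rw [add_assoc k m 1, Nat.choose_two_add, Nat.choose_two_succ, ← Nat.two_mul_choose_two_succ,
      Nat.choose_two_succ]
    ring
  have hpow : q ^ k.choose 2 * q ^ k * q ^ (k + m + 1).choose 2
      = q ^ (k * (k + 1)) * (q ^ m.choose 2 * (q ^ (k + 1)) ^ m) := by
    rw [← pow_add, ← pow_add, ← pow_mul, ← pow_add, ← pow_add, hexp]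
  have hne := qPoch_ne_zero (mul_pow_ne_one hq hq.le)
  rw [Nat.add_sub_cancel_left, qBinomial_eq_div hq (Nat.le_add_right k m), Nat.add_sub_cancel_left,
    Nat.mul_succ_div_two, slaterSummand, eulerTerm]
  field_simp [hne k, hne m, hne (k + m)]
  linear_combination hpow

end Slater

theorem stmt7 (q : ℂ) (hq : ‖q‖ < 1) :
    ∑' n : ℕ, qPoch (-q) q n * q ^ (n * (n + 1) / 2) / qPoch q q n
      = qPochInf (-q) q * qPochInf (-q ^ 2) (q ^ 2) := by
  simp_rw [sum_antidiagonal_slaterSummand hq]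
  exact (hasSum_slaterSummand hq).sum_antidiagonal.tsum_eq
end

section
/- Theorem 3.9: ∑_{n=0}^∞ (-1)^n q^(n²+n) / (-q²;q²)_n = ∑_{n=0}^∞ q^(3n²+n) (1 - q^(4n+2)). -/
/-!
Both sides are deformed by a parameter `z`:
`L(z) = ∑ (-1)ⁿ q^(n²+n) zⁿ / (-q²;q²)ₙ` and
`R(z) = ∑ (-q²z;q²)ₙ / (-q²;q²)ₙ · q^(3n²+n) zⁿ (1 - q^(4n+2) z)`.
Each satisfies `F(z) + (1 + q²z) F(q²z) = 2`, because the combined series telescopes, and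
`F(z) = 1 + O(z)` on the closed unit disc. Hence `D = L - R` satisfies
`D(z) = (-1)ᴷ (-q²z;q²)_K D(q^(2K) z)`; the product stays bounded while `D(q^(2K) z) = O(|q|^(2K))`,
so `D = 0`, and `z = 1` gives the theorem.
-/

open Finset Filter Topology

namespace QSeries

lemma qPoch_succ (a p : ℂ) (n : ℕ) : qPoch a p (n + 1) = qPoch a p n * (1 - a * p ^ n) :=
  prod_range_succ _ n

lemma qPoch_succ' (a p : ℂ) (n : ℕ) : qPoch a p (n + 1) = (1 - a) * qPoch (a * p) p n := by
  rw [qPoch, qPoch, prod_range_succ', mul_comm, pow_zero, mul_one]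
  exact congrArg _ (prod_congr rfl fun i _ => by ring)

lemma norm_mul_pow_le {a p : ℂ} (hp : ‖p‖ ≤ 1) (i : ℕ) : ‖a * p ^ i‖ ≤ ‖a‖ := by
  rw [norm_mul, norm_pow]
  exact mul_le_of_le_one_right (norm_nonneg a) (pow_le_one₀ (norm_nonneg p) hp)

lemma qPoch_ne_zero {a p : ℂ} (ha : ‖a‖ < 1) (hp : ‖p‖ ≤ 1) (n : ℕ) : qPoch a p n ≠ 0 := by
  refine prod_ne_zero_iff.mpr fun i _ h => ?_
  have h1 : a * p ^ i = 1 := (sub_eq_zero.mp h).symm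
  have h2 := (norm_mul_pow_le (a := a) hp i).trans_lt ha
  rw [h1, norm_one] at h2
  exact lt_irrefl 1 h2

lemma sum_norm_mul_pow_le (a : ℂ) {p : ℂ} (hp : ‖p‖ < 1) (n : ℕ) :
    ∑ i ∈ range n, ‖a * p ^ i‖ ≤ ‖a‖ / (1 - ‖p‖) := by
  have hgeom := geom_sum_Ico_le_of_lt_one (m := 0) (n := n) (norm_nonneg p) hp
  rw [← range_eq_Ico, pow_zero] at hgeom
  simp_rw [norm_mul, norm_pow, ← mul_sum]
  calc ‖a‖ * ∑ i ∈ range n, ‖p‖ ^ i ≤ ‖a‖ * (1 / (1 - ‖p‖)) := by gcongr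
    _ = ‖a‖ / (1 - ‖p‖) := mul_one_div _ _

lemma norm_qPoch_le (a : ℂ) {p : ℂ} (hp : ‖p‖ < 1) (n : ℕ) :
    ‖qPoch a p n‖ ≤ Real.exp (‖a‖ / (1 - ‖p‖)) :=
  calc ‖qPoch a p n‖ = ∏ i ∈ range n, ‖1 - a * p ^ i‖ := norm_prod _ _
    _ ≤ ∏ i ∈ range n, (1 + ‖a * p ^ i‖) :=
        prod_le_prod (fun _ _ => norm_nonneg _) fun _ _ =>
          (norm_sub_le _ _).trans_eq (by rw [norm_one])
    _ ≤ Real.exp (∑ i ∈ range n, ‖a * p ^ i‖) :=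
        Real.prod_one_add_le_exp_sum _ fun _ => norm_nonneg _
    _ ≤ Real.exp (‖a‖ / (1 - ‖p‖)) := Real.exp_le_exp.mpr (sum_norm_mul_pow_le a hp n)

lemma norm_inv_one_sub_le {𝕜 : Type*} [NormedDivisionRing 𝕜] {x : 𝕜} {c : ℝ} (hx : ‖x‖ ≤ c)
    (hc : c < 1) : ‖(1 - x)⁻¹‖ ≤ 1 + ‖x‖ / (1 - c) := by
  have hpos : 0 < 1 - ‖x‖ := by linarith
  have hle : 1 - ‖x‖ ≤ ‖1 - x‖ := by simpa using norm_sub_norm_le (1 : 𝕜) x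
  calc ‖(1 - x)⁻¹‖ = ‖1 - x‖⁻¹ := norm_inv _
    _ ≤ (1 - ‖x‖)⁻¹ := inv_anti₀ hpos hle
    _ = 1 + ‖x‖ / (1 - ‖x‖) := by field_simp; ring
    _ ≤ 1 + ‖x‖ / (1 - c) := by gcongr

lemma norm_inv_qPoch_le {a p : ℂ} (ha : ‖a‖ < 1) (hp : ‖p‖ < 1) (n : ℕ) :
    ‖(qPoch a p n)⁻¹‖ ≤ Real.exp (‖a‖ / (1 - ‖p‖) / (1 - ‖a‖)) :=
  calc ‖(qPoch a p n)⁻¹‖ = ∏ i ∈ range n, ‖(1 - a * p ^ i)⁻¹‖ := by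
        rw [qPoch, ← prod_inv_distrib, norm_prod]
    _ ≤ ∏ i ∈ range n, (1 + ‖a * p ^ i‖ / (1 - ‖a‖)) :=
        prod_le_prod (fun _ _ => norm_nonneg _) fun i _ =>
          norm_inv_one_sub_le (norm_mul_pow_le hp.le i) ha
    _ ≤ Real.exp (∑ i ∈ range n, ‖a * p ^ i‖ / (1 - ‖a‖)) :=
        Real.prod_one_add_le_exp_sum _ fun _ => div_nonneg (norm_nonneg _) (by linarith)
    _ ≤ Real.exp (‖a‖ / (1 - ‖p‖) / (1 - ‖a‖)) := by
        rw [← sum_div]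
        gcongr
        exact sum_norm_mul_pow_le a hp n

lemma tsum_sub_succ_eq {G : Type*} [AddCommGroup G] [TopologicalSpace G] [IsTopologicalAddGroup G]
    [T2Space G] {g : ℕ → G} (hs : Summable fun n => g n - g (n + 1))
    (hg : Tendsto g atTop (𝓝 0)) : ∑' n, (g n - g (n + 1)) = g 0 := by
  have hpartial := hs.hasSum.tendsto_sum_nat
  simp_rw [sum_range_sub'] at hpartial
  exact tendsto_nhds_unique hpartial (by simpa using tendsto_const_nhds.sub hg)

lemma tsum_add_mul_tsum_eq_of_eq_sub_succ {R : Type*} [Ring R] [TopologicalSpace R]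
    [IsTopologicalRing R] [T2Space R] {f g h : ℕ → R} (c : R)
    (hf : Summable f) (hg : Summable g) (hh : Tendsto h atTop (𝓝 0))
    (hfg : ∀ n, f n + c * g n = h n - h (n + 1)) : ∑' n, f n + c * ∑' n, g n = h 0 := by
  have hsum := hf.add (hg.mul_left c)
  rw [← hg.tsum_mul_left, ← hf.tsum_add (hg.mul_left c), tsum_congr hfg]
  exact tsum_sub_succ_eq (by simpa only [← funext hfg] using hsum) hh

lemma summable_of_norm_le_mul_pow {E : Type*} [NormedAddCommGroup E] [CompleteSpace E]
    {f : ℕ → E} {B ρ : ℝ} (hρ0 : 0 ≤ ρ) (hρ1 : ρ < 1) (hf : ∀ n, ‖f n‖ ≤ B * ρ ^ n) :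
    Summable f :=
  .of_norm_bounded ((summable_geometric_of_lt_one hρ0 hρ1).mul_left B) hf

lemma norm_tsum_sub_zero_le {E : Type*} [NormedAddCommGroup E] [CompleteSpace E] {f : ℕ → E}
    {B r x : ℝ} (hr0 : 0 ≤ r) (hr1 : r < 1) (hx0 : 0 ≤ x) (hx1 : x ≤ 1)
    (hf : ∀ n, ‖f n‖ ≤ B * (r * x) ^ n) : ‖∑' n, f n - f 0‖ ≤ B * r / (1 - r) * x := by
  have hB : 0 ≤ B := by simpa using (norm_nonneg _).trans (hf 0)
  have hrx1 : r * x < 1 := by nlinarith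
  rw [(summable_of_norm_le_mul_pow (by positivity) hrx1 hf).tsum_eq_zero_add, add_sub_cancel_left]
  refine (tsum_of_norm_bounded ((hasSum_geometric_of_lt_one hr0 hr1).mul_left (B * r * x))
    fun n => ?_).trans_eq (by ring)
  calc ‖f (n + 1)‖ ≤ B * (r * x) ^ (n + 1) := hf _
    _ = B * r * x * (r ^ n * x ^ n) := by ring
    _ ≤ B * r * x * r ^ n := by
        gcongr
        exact mul_le_of_le_one_right (by positivity) (pow_le_one₀ hx0 hx1)

lemma eq_zero_of_eq_neg_shift_of_norm_le {p : ℂ} (hp : ‖p‖ < 1) {D : ℂ → ℂ} {C : ℝ}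
    (hD : ∀ z, ‖z‖ ≤ 1 → D z = -((1 + p * z) * D (p * z)))
    (hC : ∀ w, ‖w‖ ≤ 1 → ‖D w‖ ≤ C * ‖w‖) {z : ℂ} (hz : ‖z‖ ≤ 1) : D z = 0 := by
  have hball : ∀ K : ℕ, ‖p ^ K * z‖ ≤ 1 := fun K => by
    rw [mul_comm]
    exact (norm_mul_pow_le hp.le K).trans hz
  have hiter : ∀ K : ℕ, D z = (-1) ^ K * qPoch (-(p * z)) p K * D (p ^ K * z) := by
    intro K
    induction K with
    | zero => simp [qPoch]
    | succ K ih =>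
      rw [ih, hD _ (hball K), qPoch_succ, show p ^ (K + 1) * z = p * (p ^ K * z) by ring]
      ring
  have hbound : ∀ K : ℕ, ‖D z‖ ≤ Real.exp (‖-(p * z)‖ / (1 - ‖p‖)) * (C * (‖z‖ * ‖p‖ ^ K)) := by
    intro K
    rw [hiter K, norm_mul, norm_mul, norm_pow, norm_neg, norm_one, one_pow, one_mul]
    refine mul_le_mul (norm_qPoch_le _ hp K) ((hC _ (hball K)).trans_eq ?_) (norm_nonneg _)
      (Real.exp_pos _).le
    rw [norm_mul, norm_pow, mul_comm ‖z‖]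
  have hlim : Tendsto (fun K : ℕ => Real.exp (‖-(p * z)‖ / (1 - ‖p‖)) * (C * (‖z‖ * ‖p‖ ^ K)))
      atTop (𝓝 0) := by
    simpa using ((tendsto_pow_atTop_nhds_zero_of_lt_one (norm_nonneg p) hp).const_mul ‖z‖
      |>.const_mul C).const_mul (Real.exp (‖-(p * z)‖ / (1 - ‖p‖)))
  exact norm_le_zero_iff.mp (ge_of_tendsto' hlim hbound)

section Series

variable (q : ℂ)

noncomputable def leftTerm (z : ℂ) (n : ℕ) : ℂ :=
  (-1) ^ n * q ^ (n ^ 2 + n) * z ^ n / qPoch (-q ^ 2) (q ^ 2) n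

noncomputable def rightCore (z : ℂ) (n : ℕ) : ℂ :=
  qPoch (-q ^ 2 * z) (q ^ 2) n * q ^ (3 * n ^ 2 + n) * z ^ n / qPoch (-q ^ 2) (q ^ 2) n

noncomputable def rightTerm (z : ℂ) (n : ℕ) : ℂ :=
  rightCore q z n * (1 - q ^ (4 * n + 2) * z)

noncomputable def leftSeries (z : ℂ) : ℂ := ∑' n, leftTerm q z n

noncomputable def rightSeries (z : ℂ) : ℂ := ∑' n, rightTerm q z n

lemma qPoch_neg_sq_succ (z : ℂ) (n : ℕ) :
    qPoch (-q ^ 2 * z) (q ^ 2) (n + 1) =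
      qPoch (-q ^ 2 * z) (q ^ 2) n * (1 + q ^ (2 * n + 2) * z) := by
  rw [qPoch_succ]; ring

lemma leftTerm_sq_mul (z : ℂ) (n : ℕ) :
    leftTerm q (q ^ 2 * z) n = q ^ (2 * n) * leftTerm q z n := by
  rw [leftTerm, leftTerm, mul_pow, ← pow_mul]
  ring

lemma one_add_mul_rightCore_sq_mul (z : ℂ) (n : ℕ) :
    (1 + q ^ 2 * z) * rightCore q (q ^ 2 * z) n =
      q ^ (2 * n) * (1 + q ^ (2 * n + 2) * z) * rightCore q z n := by
  have hQ : (1 + q ^ 2 * z) * qPoch (-q ^ 2 * (q ^ 2 * z)) (q ^ 2) n =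
      qPoch (-q ^ 2 * z) (q ^ 2) n * (1 + q ^ (2 * n + 2) * z) := by
    rw [← qPoch_neg_sq_succ, qPoch_succ', show -q ^ 2 * z * q ^ 2 = -q ^ 2 * (q ^ 2 * z) by ring]
    ring
  rw [rightCore, rightCore, mul_pow, ← pow_mul]
  linear_combination q ^ (3 * n ^ 2 + n) * (q ^ (2 * n) * z ^ n) / qPoch (-q ^ 2) (q ^ 2) n * hQ

variable {q}

lemma norm_sq_lt_one (hq : ‖q‖ < 1) : ‖q ^ 2‖ < 1 := by
  rw [norm_pow]
  exact pow_lt_one₀ (norm_nonneg q) hq two_ne_zero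

lemma qPoch_neg_sq_ne_zero (hq : ‖q‖ < 1) (n : ℕ) : qPoch (-q ^ 2) (q ^ 2) n ≠ 0 :=
  qPoch_ne_zero (by rw [norm_neg]; exact norm_sq_lt_one hq) (norm_sq_lt_one hq).le n

lemma qPoch_neg_sq_succ_one (n : ℕ) :
    qPoch (-q ^ 2) (q ^ 2) (n + 1) = qPoch (-q ^ 2) (q ^ 2) n * (1 + q ^ (2 * n + 2)) := by
  simpa using qPoch_neg_sq_succ q 1 n

lemma one_add_pow_ne_zero (hq : ‖q‖ < 1) (n : ℕ) : 1 + q ^ (2 * n + 2) ≠ 0 := by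
  have h := qPoch_neg_sq_ne_zero hq (n + 1)
  rw [qPoch_neg_sq_succ_one] at h
  exact right_ne_zero_of_mul h

lemma leftTerm_succ (hq : ‖q‖ < 1) (z : ℂ) (n : ℕ) :
    leftTerm q z (n + 1) * (1 + q ^ (2 * n + 2)) = -(q ^ (2 * n + 2) * z) * leftTerm q z n := by
  have hPn := qPoch_neg_sq_ne_zero hq n
  have hfactor := one_add_pow_ne_zero hq n
  rw [leftTerm, leftTerm, qPoch_neg_sq_succ_one]
  field_simp
  ring

lemma rightCore_succ (hq : ‖q‖ < 1) (z : ℂ) (n : ℕ) :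
    rightCore q z (n + 1) * (1 + q ^ (2 * n + 2)) =
      q ^ (6 * n + 4) * z * (1 + q ^ (2 * n + 2) * z) * rightCore q z n := by
  have hPn := qPoch_neg_sq_ne_zero hq n
  have hfactor := one_add_pow_ne_zero hq n
  rw [rightCore, rightCore, qPoch_neg_sq_succ_one, qPoch_neg_sq_succ]
  field_simp
  ring

lemma leftTerm_add_mul_leftTerm_sq_mul (hq : ‖q‖ < 1) (z : ℂ) (n : ℕ) :
    leftTerm q z n + (1 + q ^ 2 * z) * leftTerm q (q ^ 2 * z) n =
      leftTerm q z n * (1 + q ^ (2 * n)) - leftTerm q z (n + 1) * (1 + q ^ (2 * (n + 1))) := by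
  rw [leftTerm_sq_mul]
  linear_combination leftTerm_succ hq z n

lemma rightTerm_add_mul_rightTerm_sq_mul (hq : ‖q‖ < 1) (z : ℂ) (n : ℕ) :
    rightTerm q z n + (1 + q ^ 2 * z) * rightTerm q (q ^ 2 * z) n =
      rightCore q z n * (1 + q ^ (2 * n)) - rightCore q z (n + 1) * (1 + q ^ (2 * (n + 1))) := by
  rw [rightTerm, rightTerm]
  linear_combination (1 - q ^ (4 * n + 2) * (q ^ 2 * z)) * one_add_mul_rightCore_sq_mul q z n +
    rightCore_succ hq z n

lemma norm_mul_norm_lt_one (hq : ‖q‖ < 1) {z : ℂ} (hz : ‖z‖ ≤ 1) : ‖q‖ * ‖z‖ < 1 :=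
  (mul_le_of_le_one_right (norm_nonneg q) hz).trans_lt hq

lemma norm_sq_mul_le_one (hq : ‖q‖ < 1) {z : ℂ} (hz : ‖z‖ ≤ 1) : ‖q ^ 2 * z‖ ≤ 1 := by
  rw [norm_mul]
  exact mul_le_one₀ (norm_sq_lt_one hq).le (norm_nonneg z) hz

lemma norm_inv_qPoch_neg_sq_le (hq : ‖q‖ < 1) (n : ℕ) :
    ‖(qPoch (-q ^ 2) (q ^ 2) n)⁻¹‖ ≤
      Real.exp (‖q ^ 2‖ / (1 - ‖q ^ 2‖) / (1 - ‖q ^ 2‖)) := by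
  have h := norm_inv_qPoch_le (by rw [norm_neg]; exact norm_sq_lt_one hq) (norm_sq_lt_one hq) n
  rwa [norm_neg] at h

lemma exists_norm_leftTerm_le (hq : ‖q‖ < 1) :
    ∃ B, ∀ z : ℂ, ∀ n, ‖leftTerm q z n‖ ≤ B * (‖q‖ * ‖z‖) ^ n := by
  refine ⟨Real.exp (‖q ^ 2‖ / (1 - ‖q ^ 2‖) / (1 - ‖q ^ 2‖)), fun z n => ?_⟩
  have hpow : ‖q‖ ^ (n ^ 2 + n) ≤ ‖q‖ ^ n :=
    pow_le_pow_of_le_one (norm_nonneg q) hq.le (Nat.le_add_left n _)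
  have hinv := norm_inv_qPoch_neg_sq_le hq n
  rw [leftTerm, div_eq_mul_inv, norm_mul, norm_mul, norm_mul, norm_pow, norm_pow, norm_pow,
    norm_neg, norm_one, one_pow, one_mul, mul_pow]
  calc ‖q‖ ^ (n ^ 2 + n) * ‖z‖ ^ n * ‖(qPoch (-q ^ 2) (q ^ 2) n)⁻¹‖
      ≤ ‖q‖ ^ n * ‖z‖ ^ n * Real.exp (‖q ^ 2‖ / (1 - ‖q ^ 2‖) / (1 - ‖q ^ 2‖)) := by
        gcongr
    _ = _ := mul_comm _ _

lemma exists_norm_rightCore_le (hq : ‖q‖ < 1) :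
    ∃ B, ∀ z : ℂ, ‖z‖ ≤ 1 → ∀ n, ‖rightCore q z n‖ ≤ B * (‖q‖ * ‖z‖) ^ n := by
  refine ⟨Real.exp (1 / (1 - ‖q ^ 2‖)) * Real.exp (‖q ^ 2‖ / (1 - ‖q ^ 2‖) / (1 - ‖q ^ 2‖)),
    fun z hz n => ?_⟩
  have hQ : ‖qPoch (-q ^ 2 * z) (q ^ 2) n‖ ≤ Real.exp (1 / (1 - ‖q ^ 2‖)) := by
    refine (norm_qPoch_le _ (norm_sq_lt_one hq) n).trans (Real.exp_le_exp.mpr ?_)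
    have h1 : 0 < 1 - ‖q ^ 2‖ := sub_pos.mpr (norm_sq_lt_one hq)
    gcongr
    rw [neg_mul, norm_neg]
    exact norm_sq_mul_le_one hq hz
  have hpow : ‖q‖ ^ (3 * n ^ 2 + n) ≤ ‖q‖ ^ n :=
    pow_le_pow_of_le_one (norm_nonneg q) hq.le (Nat.le_add_left n _)
  have hinv := norm_inv_qPoch_neg_sq_le hq n
  rw [rightCore, div_eq_mul_inv, norm_mul, norm_mul, norm_mul, norm_pow, norm_pow, mul_pow]
  calc ‖qPoch (-q ^ 2 * z) (q ^ 2) n‖ * ‖q‖ ^ (3 * n ^ 2 + n) * ‖z‖ ^ n *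
        ‖(qPoch (-q ^ 2) (q ^ 2) n)⁻¹‖
      ≤ Real.exp (1 / (1 - ‖q ^ 2‖)) * ‖q‖ ^ n * ‖z‖ ^ n *
          Real.exp (‖q ^ 2‖ / (1 - ‖q ^ 2‖) / (1 - ‖q ^ 2‖)) := by
        gcongr
    _ = _ := by ring

lemma exists_norm_rightTerm_le (hq : ‖q‖ < 1) :
    ∃ B, ∀ z : ℂ, ‖z‖ ≤ 1 → ∀ n, ‖rightTerm q z n‖ ≤ B * (‖q‖ * ‖z‖) ^ n := by
  obtain ⟨B, hB⟩ := exists_norm_rightCore_le hq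
  refine ⟨2 * B, fun z hz n => ?_⟩
  have hfactor : ‖1 - q ^ (4 * n + 2) * z‖ ≤ 2 := by
    refine (norm_sub_le _ _).trans ?_
    rw [norm_one, norm_mul, norm_pow]
    linarith [mul_le_one₀ (pow_le_one₀ (n := 4 * n + 2) (norm_nonneg q) hq.le) (norm_nonneg z) hz]
  rw [rightTerm, norm_mul]
  calc ‖rightCore q z n‖ * ‖1 - q ^ (4 * n + 2) * z‖ ≤ B * (‖q‖ * ‖z‖) ^ n * 2 :=
        mul_le_mul (hB z hz n) hfactor (norm_nonneg _) ((norm_nonneg _).trans (hB z hz n))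
    _ = _ := by ring

lemma summable_leftTerm (hq : ‖q‖ < 1) {z : ℂ} (hz : ‖z‖ ≤ 1) : Summable (leftTerm q z) := by
  obtain ⟨B, hB⟩ := exists_norm_leftTerm_le hq
  exact summable_of_norm_le_mul_pow (by positivity) (norm_mul_norm_lt_one hq hz) (hB z)

lemma summable_rightCore (hq : ‖q‖ < 1) {z : ℂ} (hz : ‖z‖ ≤ 1) : Summable (rightCore q z) := by
  obtain ⟨B, hB⟩ := exists_norm_rightCore_le hq
  exact summable_of_norm_le_mul_pow (by positivity) (norm_mul_norm_lt_one hq hz) (hB z hz)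

lemma summable_rightTerm (hq : ‖q‖ < 1) {z : ℂ} (hz : ‖z‖ ≤ 1) : Summable (rightTerm q z) := by
  obtain ⟨B, hB⟩ := exists_norm_rightTerm_le hq
  exact summable_of_norm_le_mul_pow (by positivity) (norm_mul_norm_lt_one hq hz) (hB z hz)

lemma tendsto_mul_one_add_pow_two_mul (hq : ‖q‖ < 1) {f : ℕ → ℂ} (hf : Tendsto f atTop (𝓝 0)) :
    Tendsto (fun n => f n * (1 + q ^ (2 * n))) atTop (𝓝 0) := by
  have hpow : Tendsto (fun n : ℕ => q ^ (2 * n)) atTop (𝓝 0) := by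
    simpa only [pow_mul] using tendsto_pow_atTop_nhds_zero_of_norm_lt_one (norm_sq_lt_one hq)
  simpa using hf.mul (tendsto_const_nhds.add hpow)

lemma leftSeries_add_mul_leftSeries_sq_mul (hq : ‖q‖ < 1) {z : ℂ} (hz : ‖z‖ ≤ 1) :
    leftSeries q z + (1 + q ^ 2 * z) * leftSeries q (q ^ 2 * z) = 2 := by
  have h := tsum_add_mul_tsum_eq_of_eq_sub_succ (h := fun n => leftTerm q z n * (1 + q ^ (2 * n)))
    _ (summable_leftTerm hq hz) (summable_leftTerm hq (norm_sq_mul_le_one hq hz))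
    (tendsto_mul_one_add_pow_two_mul hq (summable_leftTerm hq hz).tendsto_atTop_zero)
    (leftTerm_add_mul_leftTerm_sq_mul hq z)
  rw [leftSeries, leftSeries, h]
  simp [leftTerm, qPoch, one_add_one_eq_two]

lemma rightSeries_add_mul_rightSeries_sq_mul (hq : ‖q‖ < 1) {z : ℂ} (hz : ‖z‖ ≤ 1) :
    rightSeries q z + (1 + q ^ 2 * z) * rightSeries q (q ^ 2 * z) = 2 := by
  have h := tsum_add_mul_tsum_eq_of_eq_sub_succ (h := fun n => rightCore q z n * (1 + q ^ (2 * n)))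
    _ (summable_rightTerm hq hz) (summable_rightTerm hq (norm_sq_mul_le_one hq hz))
    (tendsto_mul_one_add_pow_two_mul hq (summable_rightCore hq hz).tendsto_atTop_zero)
    (rightTerm_add_mul_rightTerm_sq_mul hq z)
  rw [rightSeries, rightSeries, h]
  simp [rightCore, qPoch, one_add_one_eq_two]

lemma exists_norm_leftSeries_sub_one_le (hq : ‖q‖ < 1) :
    ∃ C, ∀ w : ℂ, ‖w‖ ≤ 1 → ‖leftSeries q w - 1‖ ≤ C * ‖w‖ := by
  obtain ⟨B, hB⟩ := exists_norm_leftTerm_le hq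
  refine ⟨B * ‖q‖ / (1 - ‖q‖), fun w hw => ?_⟩
  have h0 : leftTerm q w 0 = 1 := by simp [leftTerm, qPoch]
  simpa only [leftSeries, h0] using
    norm_tsum_sub_zero_le (norm_nonneg q) hq (norm_nonneg w) hw (hB w)

lemma exists_norm_rightSeries_sub_one_le (hq : ‖q‖ < 1) :
    ∃ C, ∀ w : ℂ, ‖w‖ ≤ 1 → ‖rightSeries q w - 1‖ ≤ C * ‖w‖ := by
  obtain ⟨B, hB⟩ := exists_norm_rightTerm_le hq
  refine ⟨B * ‖q‖ / (1 - ‖q‖) + ‖q ^ 2‖, fun w hw => ?_⟩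
  have h0 : rightTerm q w 0 = 1 - q ^ 2 * w := by simp [rightTerm, rightCore, qPoch]
  have htail := norm_tsum_sub_zero_le (norm_nonneg q) hq (norm_nonneg w) hw (hB w hw)
  rw [h0] at htail
  calc ‖rightSeries q w - 1‖ = ‖(rightSeries q w - (1 - q ^ 2 * w)) - q ^ 2 * w‖ := by ring_nf
    _ ≤ ‖rightSeries q w - (1 - q ^ 2 * w)‖ + ‖q ^ 2 * w‖ := norm_sub_le _ _
    _ ≤ B * ‖q‖ / (1 - ‖q‖) * ‖w‖ + ‖q ^ 2‖ * ‖w‖ := by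
        rw [norm_mul]; exact add_le_add_left htail _
    _ = _ := by ring

lemma leftSeries_eq_rightSeries (hq : ‖q‖ < 1) {z : ℂ} (hz : ‖z‖ ≤ 1) :
    leftSeries q z = rightSeries q z := by
  obtain ⟨C₁, hC₁⟩ := exists_norm_leftSeries_sub_one_le hq
  obtain ⟨C₂, hC₂⟩ := exists_norm_rightSeries_sub_one_le hq
  refine sub_eq_zero.mp (eq_zero_of_eq_neg_shift_of_norm_le (norm_sq_lt_one hq)
    (D := fun w => leftSeries q w - rightSeries q w) (C := C₁ + C₂) (fun w hw => ?_)
    (fun w hw => ?_) hz)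
  · linear_combination leftSeries_add_mul_leftSeries_sq_mul hq hw -
      rightSeries_add_mul_rightSeries_sq_mul hq hw
  · calc ‖leftSeries q w - rightSeries q w‖ = ‖(leftSeries q w - 1) - (rightSeries q w - 1)‖ := by
          ring_nf
      _ ≤ ‖leftSeries q w - 1‖ + ‖rightSeries q w - 1‖ := norm_sub_le _ _
      _ ≤ C₁ * ‖w‖ + C₂ * ‖w‖ := add_le_add (hC₁ w hw) (hC₂ w hw)
      _ = (C₁ + C₂) * ‖w‖ := by ring

lemma leftTerm_one (n : ℕ) :
    leftTerm q 1 n = (-1) ^ n * q ^ (n ^ 2 + n) / qPoch (-q ^ 2) (q ^ 2) n := by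
  rw [leftTerm, one_pow, mul_one]

lemma rightTerm_one (hq : ‖q‖ < 1) (n : ℕ) :
    rightTerm q 1 n = q ^ (3 * n ^ 2 + n) * (1 - q ^ (4 * n + 2)) := by
  rw [rightTerm, rightCore, mul_one, one_pow, mul_one, mul_one, mul_comm (qPoch _ _ n),
    mul_div_assoc, div_self (qPoch_neg_sq_ne_zero hq n), mul_one]

end Series

end QSeries

open QSeries in
theorem stmt17 (q : ℂ) (hq : ‖q‖ < 1) :
    ∑' n : ℕ, (-1 : ℂ) ^ n * q ^ (n ^ 2 + n) / qPoch (-q ^ 2) (q ^ 2) n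
      = ∑' n : ℕ, q ^ (3 * n ^ 2 + n) * (1 - q ^ (4 * n + 2)) := by
  simpa only [leftSeries, rightSeries, leftTerm_one, rightTerm_one hq] using
    leftSeries_eq_rightSeries hq (z := 1) (by rw [norm_one])
end
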